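/- Let n ≥ 3 and let H_n be the helm graph obtained from the wheel graph W_{n+1} by attaching a pendant edge to each of the n rim vertices. Then the chromatic curling number of H_n equals n + 1. -/

import Mathlib

open SimpleGraph Finset

/-- A proper vertex colouring of `G` with colour set `Fin k`. -/
def IsProperColoring {V : Type*} (G : SimpleGraph V) {k : ℕ} (C : V → Fin k) : Prop :=
  ∀ ⦃v w⦄, G.Adj v w → C v ≠ C w

/-- The chromatic number of `G`, as a natural number. -/
noncomputable def chi {V : Type*} (G : SimpleGraph V) : ℕ :=
  G.chromaticNumber.toNat

/-- θ(cᵢ): the number of vertices receiving colour `i` under the colouring `C`. -/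
def theta {V : Type*} [Fintype V] {k : ℕ} (C : V → Fin k) (i : Fin k) : ℕ :=
  (Finset.univ.filter fun v => C v = i).card

/-- The list of colour class sizes of `C`, sorted in descending order. -/
def classSizesDesc {V : Type*} [Fintype V] {k : ℕ} (C : V → Fin k) : List ℕ :=
  (List.insertionSort (· ≤ ·) (List.ofFn fun i => theta C i)).reverse

/-- A χ⁻-colouring of `G`: a proper colouring with exactly χ(G) colours such that,
greedily, the colour class of `c₁` is as large as possible, then the colour class of
`c₂` is as large as possible among the remaining vertices, and so on; equivalently,
the descending sequence of colour class sizes is lexicographically maximal among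
all proper colourings with χ(G) colours. -/
def IsChiMinusColoring {V : Type*} [Fintype V] (G : SimpleGraph V)
    (C : V → Fin (chi G)) : Prop :=
  IsProperColoring G C ∧
    ∀ C' : V → Fin (chi G), IsProperColoring G C' →
      ¬ List.Lex (· < ·) (classSizesDesc C) (classSizesDesc C')

/-- The helm graph `Hₙ`: the wheel graph `W_{n+1}` (rim vertices `some (v, false)`,
central vertex `none`) together with a pendant vertex `some (v, true)` attached to
each rim vertex `some (v, false)`. -/
def helmG (n : ℕ) : SimpleGraph (Option (Fin n × Bool)) :=
  SimpleGraph.fromRel (fun a b =>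
    match a, b with
    | some (v, false), some (w, false) => w.val = (v.val + 1) % n
    | some (v, false), some (w, true) => w = v
    | none, some (_, false) => True
    | _, _ => False)


-- ### Auxiliary lemmas ###

def rimV (n m : ℕ) (h : m < n) : Option (Fin n × Bool) := some (⟨m, h⟩, false)

lemma adj_center (n m : ℕ) (h : m < n) : (helmG n).Adj none (rimV n m h) := by
  rw [helmG, SimpleGraph.fromRel_adj]
  exact ⟨by simp [rimV], Or.inl trivial⟩

lemma adj_rim (n m : ℕ) (h1 : m < n) (h2 : (m+1) % n < n) (hne : m ≠ (m+1) % n) :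
    (helmG n).Adj (rimV n m h1) (rimV n ((m+1) % n) h2) := by
  rw [helmG, SimpleGraph.fromRel_adj]
  refine ⟨by simp [rimV, Fin.ext_iff]; exact hne, Or.inl rfl⟩

lemma adj_rim' (n m m' : ℕ) (h1 : m < n) (h2 : m' < n) (hm : m' = (m+1) % n)
    (hne : m ≠ m') : (helmG n).Adj (rimV n m h1) (rimV n m' h2) := by
  subst hm; exact adj_rim n m h1 h2 hne

lemma adj_pendant (n m : ℕ) (h : m < n) :
    (helmG n).Adj (rimV n m h) (some (⟨m, h⟩, true)) := by
  rw [helmG, SimpleGraph.fromRel_adj]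
  exact ⟨by simp [rimV], Or.inl rfl⟩

lemma classSize_le (n : ℕ) {k : ℕ} (C : Option (Fin n × Bool) → Fin k)
    (hC : IsProperColoring (helmG n) C) (i : Fin k) : theta C i ≤ n + 1 := by
  have key : theta C i ≤ (Finset.univ : Finset (Option (Fin n))).card := by
    apply Finset.card_le_card_of_injOn (fun x => Option.map Prod.fst x)
      (fun _ _ => Finset.mem_univ _)
    intro x hx y hy hxy
    simp only [Finset.coe_filter, Set.mem_setOf_eq, Finset.mem_univ, true_and] at hx hy
    match x, y with
    | none, none => rfl
    | none, some _ => simp at hxy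
    | some _, none => simp at hxy
    | some (v, b1), some (w, b2) =>
      simp only [Option.map_some, Option.some.injEq] at hxy
      subst hxy
      by_contra hne
      have hb : b1 ≠ b2 := by
        intro h; exact hne (by rw [h])
      have hadj : (helmG n).Adj (some (v, b1)) (some (v, b2)) := by
        rcases b1 <;> rcases b2 <;> simp at hb
        · simpa [rimV] using adj_pendant n v.val v.isLt
        · simpa [rimV] using ((helmG n).adj_symm (adj_pendant n v.val v.isLt))
      exact hC hadj (by rw [hx, hy])
  simpa using key

lemma card_le_three_forces {α : Type*} [Fintype α] [DecidableEq α]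
    (hcard : Fintype.card α ≤ 3) (z a b c : α) (hza : z ≠ a) (hzb : z ≠ b)
    (hab : a ≠ b) (hcz : c ≠ z) : c = a ∨ c = b := by
  by_contra h
  push_neg at h
  have hle : ({c, z, a, b} : Finset α).card ≤ Fintype.card α :=
    le_trans (Finset.card_le_univ _) (by simp)
  rw [Finset.card_insert_of_notMem (by simp [hcz, h.1, h.2]),
      Finset.card_insert_of_notMem (by simp [hza, hzb]),
      Finset.card_insert_of_notMem (by simp [hab]),
      Finset.card_singleton] at hle
  omega

lemma three_le (n : ℕ) (hn : 3 ≤ n) {k : ℕ} (C : Option (Fin n × Bool) → Fin k)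
    (hC : IsProperColoring (helmG n) C) : 3 ≤ k := by
  have h0 : (0 : ℕ) < n := by omega
  have h1 : (1 : ℕ) < n := by omega
  have hz0 : C none ≠ C (rimV n 0 h0) := hC (adj_center n 0 h0)
  have hz1 : C none ≠ C (rimV n 1 h1) := hC (adj_center n 1 h1)
  have h01 : C (rimV n 0 h0) ≠ C (rimV n 1 h1) :=
    hC (adj_rim' n 0 1 h0 h1 (Nat.mod_eq_of_lt h1).symm (by omega))
  have hle : ({C none, C (rimV n 0 h0), C (rimV n 1 h1)} : Finset (Fin k)).card ≤ k := by
    refine le_trans (Finset.card_le_univ _) ?_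
    simp
  rw [Finset.card_insert_of_notMem (by simp [hz0, hz1]),
      Finset.card_insert_of_notMem (by simp [h01]),
      Finset.card_singleton] at hle
  omega

lemma four_le (n : ℕ) (hn : 3 ≤ n) (hodd : n % 2 = 1) {k : ℕ}
    (C : Option (Fin n × Bool) → Fin k)
    (hC : IsProperColoring (helmG n) C) : 4 ≤ k := by
  by_contra hk
  push_neg at hk
  have hk3 : Fintype.card (Fin k) ≤ 3 := by simp; omega
  have h0 : (0 : ℕ) < n := by omega
  have h1 : (1 : ℕ) < n := by omega
  set z := C none with hz
  set a := C (rimV n 0 h0) with ha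
  set b := C (rimV n 1 h1) with hb
  have hza : z ≠ a := hC (adj_center n 0 h0)
  have hzb : z ≠ b := hC (adj_center n 1 h1)
  have hab : a ≠ b := hC (adj_rim' n 0 1 h0 h1 (Nat.mod_eq_of_lt h1).symm (by omega))
  have key : ∀ m : ℕ, ∀ h : m < n, C (rimV n m h) = if m % 2 = 0 then a else b := by
    intro m
    induction m with
    | zero => intro h; simp [ha]
    | succ m ih =>
      intro h
      have hm : m < n := by omega
      have hprev := ih hm
      have hcz : C (rimV n (m+1) h) ≠ z := fun he => hC (adj_center n (m+1) h) he.symm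
      have hcp : C (rimV n (m+1) h) ≠ C (rimV n m hm) := by
        intro he
        exact hC (adj_rim' n m (m+1) hm h (Nat.mod_eq_of_lt h).symm (by omega)) he.symm
      rcases card_le_three_forces hk3 z a b _ hza hzb hab hcz with h' | h'
      · have hm2 : m % 2 = 1 := by
          by_contra hm2
          rw [hprev, if_pos (by omega)] at hcp
          exact hcp h'
        rw [if_pos (by omega)]; exact h'
      · have hm2 : m % 2 = 0 := by
          by_contra hm2
          rw [hprev, if_neg (by omega)] at hcp
          exact hcp h'
        rw [if_neg (by omega)]; exact h'
  have hlast : n - 1 < n := by omega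
  have hlastcol := key (n-1) hlast
  rw [if_pos (by omega)] at hlastcol
  have hadj : (helmG n).Adj (rimV n (n-1) hlast) (rimV n 0 h0) := by
    apply adj_rim' n (n-1) 0 hlast h0 _ (by omega)
    have : n - 1 + 1 = n := by omega
    rw [this, Nat.mod_self]
  exact hC hadj (by rw [hlastcol, ha])

def rimcol (n m : ℕ) : ℕ := if m = n - 1 ∧ n % 2 = 1 then 3 else m % 2 + 1

lemma rimcol_pos (n m : ℕ) : 1 ≤ rimcol n m := by
  unfold rimcol; split <;> omega

lemma rimcol_lt {n K : ℕ} (hK : 3 ≤ K) (hK4 : n % 2 = 1 → 4 ≤ K) (m : ℕ) :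
    rimcol n m < K := by
  unfold rimcol; split
  · next h => have := hK4 h.2; omega
  · omega

lemma rimcol_ne (n : ℕ) (hn : 3 ≤ n) (v w : ℕ) (hv : v < n) (hw : w < n)
    (h : w = (v + 1) % n) : rimcol n v ≠ rimcol n w := by
  unfold rimcol
  rcases eq_or_ne v (n - 1) with hv1 | hv1
  · have hw0 : w = 0 := by
      rw [h, hv1, Nat.sub_add_cancel (by omega), Nat.mod_self]
    subst hw0
    split_ifs with h1 h2 <;> omega
  · have hw' : w = v + 1 := by rw [h, Nat.mod_eq_of_lt (by omega)]
    subst hw'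
    split_ifs with h1 h2 <;> omega

def Cmax (n K : ℕ) (hK : 3 ≤ K) (hK4 : n % 2 = 1 → 4 ≤ K) :
    Option (Fin n × Bool) → Fin K
  | none => ⟨0, by omega⟩
  | some (_, true) => ⟨0, by omega⟩
  | some (v, false) => ⟨rimcol n v.val, rimcol_lt hK hK4 v.val⟩

lemma Cmax_proper (n K : ℕ) (hK : 3 ≤ K) (hK4 : n % 2 = 1 → 4 ≤ K) (hn : 3 ≤ n) :
    IsProperColoring (helmG n) (Cmax n K hK hK4) := by
  intro x y hadj
  rw [helmG, SimpleGraph.fromRel_adj] at hadj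
  obtain ⟨hne, hrel⟩ := hadj
  match x, y with
  | none, none => exact absurd rfl hne
  | none, some (w, false) =>
    simp only [Cmax, Fin.mk.injEq, ne_eq]
    have := rimcol_pos n w.val; omega
  | none, some (w, true) => rcases hrel with h | h <;> exact h.elim
  | some (v, false), none =>
    simp only [Cmax, Fin.mk.injEq, ne_eq]
    have := rimcol_pos n v.val; omega
  | some (v, true), none => rcases hrel with h | h <;> exact h.elim
  | some (v, false), some (w, false) =>
    simp only [Cmax, Fin.mk.injEq, ne_eq]
    rcases hrel with h | h
    · exact rimcol_ne n hn v.val w.val v.isLt w.isLt h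
    · exact (rimcol_ne n hn w.val v.val w.isLt v.isLt h).symm
  | some (v, false), some (w, true) =>
    simp only [Cmax, Fin.mk.injEq, ne_eq]
    have := rimcol_pos n v.val; omega
  | some (v, true), some (w, false) =>
    simp only [Cmax, Fin.mk.injEq, ne_eq]
    have := rimcol_pos n w.val; omega
  | some (v, true), some (w, true) => rcases hrel with h | h <;> exact h.elim

lemma theta_Cmax (n K : ℕ) (hK : 3 ≤ K) (hK4 : n % 2 = 1 → 4 ≤ K) :
    theta (Cmax n K hK hK4) ⟨0, by omega⟩ = n + 1 := by
  have hset : (Finset.univ.filter fun x => Cmax n K hK hK4 x = ⟨0, by omega⟩)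
      = Finset.image (Option.map fun v : Fin n => (v, true)) Finset.univ := by
    ext x
    simp only [mem_filter, mem_univ, true_and, mem_image]
    constructor
    · intro hx
      match x with
      | none => exact ⟨none, rfl⟩
      | some (v, true) => exact ⟨some v, rfl⟩
      | some (v, false) =>
        exfalso
        simp only [Cmax, Fin.mk.injEq] at hx
        have := rimcol_pos n v.val; omega
    · rintro ⟨a, rfl⟩
      match a with
      | none => rfl
      | some v => rfl
  rw [theta, hset, Finset.card_image_of_injective _
    (Option.map_injective (fun a b hab => congrArg Prod.fst hab))]
  simp

lemma classSizesDesc_cons {V : Type*} [Fintype V] {k : ℕ} (hk : 0 < k)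
    (C : V → Fin k) : ∃ t, classSizesDesc C = Finset.univ.sup (theta C) :: t := by
  set L := List.insertionSort (· ≤ ·) (List.ofFn fun i => theta C i) with hL
  have hlen : L.length = k := by
    rw [hL, List.length_insertionSort, List.length_ofFn]
  have hLne : L ≠ [] := by
    intro h; rw [h] at hlen; simp at hlen; omega
  have hne : L.reverse ≠ [] := by simpa using hLne
  obtain ⟨a, t, ht⟩ := List.exists_cons_of_ne_nil hne
  refine ⟨t, ?_⟩
  show L.reverse = _
  rw [ht]
  have haL : a ∈ L := by
    have : a ∈ L.reverse := ht ▸ List.mem_cons_self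
    exact List.mem_reverse.mp this
  have hperm := List.perm_insertionSort (· ≤ ·) (List.ofFn fun i => theta C i)
  obtain ⟨i, hi⟩ : ∃ i, theta C i = a := by
    have : a ∈ List.ofFn fun i => theta C i := hperm.mem_iff.mp haL
    rw [List.mem_ofFn] at this
    obtain ⟨i, hi⟩ := this
    exact ⟨i, hi⟩
  have h1 : a ≤ Finset.univ.sup (theta C) := hi ▸ Finset.le_sup (mem_univ i)
  have : Nonempty (Fin k) := ⟨⟨0, hk⟩⟩
  obtain ⟨j, -, hj⟩ := Finset.exists_mem_eq_sup Finset.univ univ_nonempty (theta C)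
  have hjL : theta C j ∈ L := hperm.mem_iff.mpr (by rw [List.mem_ofFn]; exact ⟨j, rfl⟩)
  have hjr : theta C j ∈ L.reverse := List.mem_reverse.mpr hjL
  rw [ht] at hjr
  have h2 : Finset.univ.sup (theta C) ≤ a := by
    rcases List.mem_cons.mp hjr with h | h
    · omega
    · have hsorted : List.Pairwise (fun x y => y ≤ x) L.reverse := by
        rw [List.pairwise_reverse]
        exact List.pairwise_insertionSort (· ≤ ·) _
      rw [ht] at hsorted
      have := List.rel_of_pairwise_cons hsorted h
      omega
  congr 1
  omega


theorem helmGraph_chromaticCurlingNumber (n : ℕ) (hn : 3 ≤ n)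
    (C : Option (Fin n × Bool) → Fin (chi (helmG n)))
    (hC : IsChiMinusColoring (helmG n) C) :
    Finset.univ.sup (theta C) = n + 1 := by
  obtain ⟨hCp, hmax⟩ := hC
  have hK3 : 3 ≤ chi (helmG n) := three_le n hn C hCp
  have hK4 : n % 2 = 1 → 4 ≤ chi (helmG n) := fun ho => four_le n hn ho C hCp
  set C' := Cmax n (chi (helmG n)) hK3 hK4 with hC'
  have hC'p : IsProperColoring (helmG n) C' := Cmax_proper n _ hK3 hK4 hn
  have hsup' : Finset.univ.sup (theta C') = n + 1 := by
    apply le_antisymm (Finset.sup_le fun i _ => classSize_le n C' hC'p i)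
    rw [← theta_Cmax n (chi (helmG n)) hK3 hK4]
    exact Finset.le_sup (mem_univ _)
  have hle : Finset.univ.sup (theta C) ≤ n + 1 :=
    Finset.sup_le fun i _ => classSize_le n C hCp i
  by_contra hne2
  have hlt : Finset.univ.sup (theta C) < n + 1 := lt_of_le_of_ne hle hne2
  obtain ⟨t, ht⟩ := classSizesDesc_cons (show 0 < chi (helmG n) by omega) C
  obtain ⟨t', ht'⟩ := classSizesDesc_cons (show 0 < chi (helmG n) by omega) C'
  apply hmax C' hC'p
  rw [ht, ht', hsup']
  exact List.Lex.rel hlt
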